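/- arXiv:1409.6282 — 2 statements merged into one kernel-verified Lean document; each statement's English description precedes it below -/
import Mathlib

section
/- The space (Der HV)₀ of derivations of HV of degree 0 decomposes as the direct sum (Der HV)₀ = (ad HV)₀ ⊕ {D_φ : φ ∈ Hom_ℤ(Γ,ℂ)} ⊕ ℂD₁ ⊕ ℂD₂, where (ad HV)₀ = {ad_u : u ∈ HV₀}: every degree-0 derivation of HV is uniquely the sum of an inner derivation ad_u with u ∈ HV₀, a derivation D_φ, and a linear combination c₁D₁ + c₂D₂. -/
/-- The generalized Heisenberg–Virasoro algebra `HV(Γ)`: a complex Lie algebra `V` equipped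
with a basis `{L_{α,i}, H_{α,i} | α ∈ Γ, i ∈ ℤ₊}` satisfying the defining bracket relations
(any term whose second index would be `-1` has coefficient `0`, so truncated subtraction
on `ℕ` is harmless). -/
structure HVData (Γ : AddSubgroup ℂ) (V : Type*) [LieRing V] [LieAlgebra ℂ V] where
  L : Γ → ℕ → V
  H : Γ → ℕ → V
  basis : Module.Basis ((↥Γ × ℕ) ⊕ (↥Γ × ℕ)) ℂ V
  basis_inl : ∀ (α : Γ) (i : ℕ), basis (Sum.inl (α, i)) = L α i
  basis_inr : ∀ (α : Γ) (i : ℕ), basis (Sum.inr (α, i)) = H α i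
  lie_L_L : ∀ (α β : Γ) (i j : ℕ),
    ⁅L α i, L β j⁆ = ((β : ℂ) - (α : ℂ)) • L (α + β) (i + j)
      + ((j : ℂ) - (i : ℂ)) • L (α + β) (i + j - 1)
  lie_L_H : ∀ (α β : Γ) (i j : ℕ),
    ⁅L α i, H β j⁆ = (β : ℂ) • H (α + β) (i + j) + (j : ℂ) • H (α + β) (i + j - 1)
  lie_H_H : ∀ (α β : Γ) (i j : ℕ), ⁅H α i, H β j⁆ = 0

namespace HVData

variable {Γ : AddSubgroup ℂ} {V : Type*} [LieRing V] [LieAlgebra ℂ V]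

/-- The abelian ideal `H` of `HV`, as a submodule. -/
noncomputable def Hspan (hv : HVData Γ V) : Submodule ℂ V :=
  Submodule.span ℂ (Set.range fun p : ↥Γ × ℕ => hv.H p.1 p.2)

/-- The graded piece `HV_α = span{L_{α,i}, H_{α,i} | i ∈ ℤ₊}`. -/
noncomputable def grade (hv : HVData Γ V) (α : Γ) : Submodule ℂ V :=
  Submodule.span ℂ (Set.range (hv.L α) ∪ Set.range (hv.H α))

/-- A derivation `D` has degree `γ` if `D (HV_α) ⊆ HV_{α+γ}` for all `α ∈ Γ`. -/
def HasDegree (hv : HVData Γ V) (D : LieDerivation ℂ V V) (γ : Γ) : Prop :=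
  ∀ α : Γ, ∀ x ∈ hv.grade α, D x ∈ hv.grade (α + γ)

end HVData

/-!
Subtracting `ad z` for some `z ∈ HV₀` (possible since `ad L_{0,0}` maps `HV₀` onto itself), we may
assume `D L_{0,0} = 0`. Then `D` commutes with `ad L_{0,0}`, which acts on `HV_α` as `α` plus the
lowering map `X_{α,i} ↦ i X_{α,i-1}`, so `D` on `HV_α` is determined by the `L_{α,0}`- and
`H_{α,0}`-coordinates of the `D X_{α,i}`. The Leibniz rule on brackets of small index shows that
these vanish for `i ≥ 2`, that `D H_{α,i}` has no `L`-part, and that the remaining ones are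
`λ`, `c₁`, `c₁ α`, `λ α + φ(α)` and `λ α + φ(α) + c₂` with `φ` additive; this says
`D = ad(z + λ L_{0,0}) + D_φ + c₁ D₁ + c₂ D₂`. For uniqueness, if `ad w + D_φ + c₁ D₁ + c₂ D₂`
vanishes, the coordinates of `⁅w, L_{α,0}⁆` and `⁅w, H_{0,1}⁆` force `φ = 0`, `c₁ = c₂ = 0`,
and then `w` is central.
-/

/-- `h₀` accounts for the truncated subtraction `0 + 0 - 1 = 0`. -/
lemma ite_add_ite_shift {M : Type*} [AddMonoid M] (j k m : ℕ) (A C₁ C₂ : M)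
    (h₁ : k + j = m + 1 → C₁ = C₂) (h₀ : k = 0 → j = 0 → C₁ = 0) :
    (if k + j = m then A else 0) + (if k + j - 1 = m then C₁ else 0) =
      (if j ≤ m ∧ k = m - j then A else 0) + (if j ≤ m + 1 ∧ k = m + 1 - j then C₂ else 0) := by
  split_ifs <;> grind

lemma eq_of_row_zero_of_rec {K : Type*} [Field K] [CharZero K] (F : ℕ → ℕ → K)
    (hrec : ∀ j m : ℕ, (j : K) * F (j - 1) m = (m + 1) * F j (m + 1))
    (hhigh : ∀ i, 2 ≤ i → F i 0 = 0) (i m : ℕ) :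
    F i m = (if m = i then F 0 0 else 0) + (if m + 1 = i then i * F 1 0 else 0) := by
  induction m generalizing i with
  | zero =>
    rcases i with _ | _ | i <;> simp [hhigh]
  | succ m ih =>
    apply mul_left_cancel₀ (Nat.cast_add_one_ne_zero m)
    rw [← hrec, ih]
    rcases i with _ | i
    · simp
    · simp only [Nat.add_sub_cancel, Nat.add_right_cancel_iff]
      split_ifs <;> first | omega | (subst_vars; push_cast; ring)

namespace HVData

variable {Γ : AddSubgroup ℂ}

lemma add_self_ne_zero {β : Γ} (hβ : β ≠ 0) : β + β ≠ 0 := by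
  intro h
  have h' : (2 : ℂ) * β = 0 := by simpa [two_mul] using congrArg ((↑) : Γ → ℂ) h
  simp_all

lemma exists_add_eq_of_ne [Nontrivial Γ] (γ : Γ) : ∃ α β : Γ, α + β = γ ∧ α ≠ β := by
  obtain ⟨β, hβ⟩ := exists_ne (0 : Γ)
  by_cases hγ : γ = β + β
  · refine ⟨γ + β, -β, by abel, fun h => ?_⟩
    have h' : (4 : ℂ) * β = 0 := by
      have := congrArg ((↑) : Γ → ℂ) h
      push_cast [hγ] at this
      linear_combination this
    simp_all
  · exact ⟨γ - β, β, by abel, fun h => hγ (by rw [← sub_add_cancel γ β, h])⟩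

lemma exists_ne_zero_add_ne_zero [Nontrivial Γ] (α : Γ) : ∃ β : Γ, β ≠ 0 ∧ α + β ≠ 0 := by
  obtain ⟨β, hβ⟩ := exists_ne (0 : Γ)
  by_cases hαβ : α + β = 0
  · refine ⟨β + β, add_self_ne_zero hβ, fun h => hβ ?_⟩
    rw [← add_assoc, hαβ, zero_add] at h
    exact h
  · exact ⟨β, hβ, hαβ⟩

lemma eq_zero_of_sub_mul_apply_add_eq [Nontrivial Γ] {X : Γ → ℂ}
    (hX : ∀ α β : Γ, ((β : ℂ) - α) * X (α + β) = -α * X α) (γ : Γ) : X γ = 0 := by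
  have hne : ∀ δ : Γ, δ ≠ 0 → X δ = 0 := fun δ hδ => by
    simpa [hδ] using hX 0 δ
  by_cases hγ : γ = 0
  · obtain ⟨β, hβ⟩ := exists_ne (0 : Γ)
    have h := hX β (-β)
    simp only [add_neg_cancel, hne β hβ, mul_zero, ← hγ] at h
    push_cast at h
    have h' : (-2 * β : ℂ) * X γ = 0 := by linear_combination h
    simpa [hβ] using h'
  · exact hne γ hγ

lemma eq_mul_of_sub_mul_apply_add_eq {g : Γ → ℂ} (h0 : g 0 = 0)
    (hg : ∀ α β : Γ, ((β : ℂ) - α) * g (α + β) = β * g β - α * g α) {x : Γ} (hx : x ≠ 0)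
    (y : Γ) : g y = g x / x * y := by
  have hneg : ∀ z : Γ, (z : ℂ) * (g z + g (-z)) = 0 := fun z => by
    have h := hg (-z) z
    rw [neg_add_cancel, h0, mul_zero] at h
    push_cast at h
    linear_combination -h
  have hx' : (x : ℂ) ≠ 0 := by simpa using hx
  have h₁ := hg (-x) y
  have h₂ := hg x (y - x)
  rw [neg_add_eq_sub] at h₁
  rw [add_sub_cancel] at h₂
  push_cast at h₁ h₂
  field_simp
  have hgx : g (-x) = -g x := by
    linear_combination (mul_eq_zero.mp (hneg x)).resolve_left hx'
  rw [hgx] at h₁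
  apply mul_left_cancel₀ hx'
  linear_combination (-(1 : ℂ) / 2) * (((y : ℂ) + x) * h₂ + ((y : ℂ) - x) * h₁)

variable {V : Type*} [LieRing V] [LieAlgebra ℂ V]

noncomputable def coeffL (hv : HVData Γ V) (γ : Γ) (m : ℕ) : V →ₗ[ℂ] ℂ :=
  hv.basis.coord (Sum.inl (γ, m))

noncomputable def coeffH (hv : HVData Γ V) (γ : Γ) (m : ℕ) : V →ₗ[ℂ] ℂ :=
  hv.basis.coord (Sum.inr (γ, m))

variable {hv : HVData Γ V}

@[simp] lemma coeffL_L (α γ : Γ) (i m : ℕ) :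
    hv.coeffL γ m (hv.L α i) = if α = γ ∧ i = m then 1 else 0 := by
  simp [coeffL, ← hv.basis_inl, Finsupp.single_apply]

@[simp] lemma coeffL_H (α γ : Γ) (i m : ℕ) : hv.coeffL γ m (hv.H α i) = 0 := by
  simp [coeffL, ← hv.basis_inr]

@[simp] lemma coeffH_L (α γ : Γ) (i m : ℕ) : hv.coeffH γ m (hv.L α i) = 0 := by
  simp [coeffH, ← hv.basis_inl]

@[simp] lemma coeffH_H (α γ : Γ) (i m : ℕ) :
    hv.coeffH γ m (hv.H α i) = if α = γ ∧ i = m then 1 else 0 := by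
  simp [coeffH, ← hv.basis_inr, Finsupp.single_apply]

lemma ext_coeff (hv : HVData Γ V) {x y : V} (hL : ∀ γ m, hv.coeffL γ m x = hv.coeffL γ m y)
    (hH : ∀ γ m, hv.coeffH γ m x = hv.coeffH γ m y) : x = y := by
  refine hv.basis.repr.injective (Finsupp.ext ?_)
  rintro (⟨γ, m⟩ | ⟨γ, m⟩)
  exacts [hL γ m, hH γ m]

@[elab_as_elim]
lemma induction_on_basis {P : V → Prop} (L : ∀ α i, P (hv.L α i)) (H : ∀ α i, P (hv.H α i))
    (zero : P 0) (add : ∀ x y, P x → P y → P (x + y)) (smul : ∀ (c : ℂ) x, P x → P (c • x))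
    (x : V) : P x := by
  induction hv.basis.mem_span x using Submodule.span_induction with
  | mem _ hx =>
    obtain ⟨⟨α, i⟩ | ⟨α, i⟩, rfl⟩ := hx
    exacts [hv.basis_inl α i ▸ L α i, hv.basis_inr α i ▸ H α i]
  | zero => exact zero
  | add x y _ _ hx hy => exact add x y hx hy
  | smul c x _ hx => exact smul c x hx

lemma coeffL_L_lie (β γ : Γ) (j m : ℕ) (y : V) :
    hv.coeffL γ m ⁅hv.L β j, y⁆ =
      (if j ≤ m then (γ - 2 * β) * hv.coeffL (γ - β) (m - j) y else 0)
      + (if j ≤ m + 1 then (m + 1 - 2 * j) * hv.coeffL (γ - β) (m + 1 - j) y else 0) := by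
  induction y using induction_on_basis with
  | L δ k =>
    rw [hv.lie_L_L]
    by_cases hδ : β + δ = γ
    · subst hδ
      simp only [map_add, map_smul, coeffL_L, smul_eq_mul, add_sub_cancel_left, true_and,
        mul_ite, mul_one, mul_zero, ← ite_and, add_comm j k]
      rw [show (↑(β + δ) : ℂ) - 2 * β = δ - β by push_cast; ring]
      refine ite_add_ite_shift j k m _ _ _ (fun h => ?_) (fun hk hj => by simp [hk, hj])
      have h' : (k : ℂ) + j = m + 1 := by exact_mod_cast h
      linear_combination h'
    · have hδ' : δ ≠ γ - β := fun h => hδ (by rw [h]; abel)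
      simp [hδ, hδ']
  | H δ k => rw [hv.lie_L_H]; simp
  | zero => simp
  | add x y hx hy => simp only [lie_add, map_add, hx, hy]; split_ifs <;> ring
  | smul c x hx => simp only [lie_smul, map_smul, smul_eq_mul, hx]; split_ifs <;> ring

lemma coeffH_L_lie (β γ : Γ) (j m : ℕ) (y : V) :
    hv.coeffH γ m ⁅hv.L β j, y⁆ =
      (if j ≤ m then (γ - β) * hv.coeffH (γ - β) (m - j) y else 0)
      + (if j ≤ m + 1 then (m + 1 - j) * hv.coeffH (γ - β) (m + 1 - j) y else 0) := by
  induction y using induction_on_basis with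
  | L δ k => rw [hv.lie_L_L]; simp
  | H δ k =>
    rw [hv.lie_L_H]
    by_cases hδ : β + δ = γ
    · subst hδ
      simp only [map_add, map_smul, coeffH_H, smul_eq_mul, add_sub_cancel_left, true_and,
        mul_ite, mul_one, mul_zero, ← ite_and, add_comm j k]
      rw [show (↑(β + δ) : ℂ) - β = δ by push_cast; ring]
      refine ite_add_ite_shift j k m _ _ _ (fun h => ?_) (fun hk _ => by simp [hk])
      have h' : (k : ℂ) + j = m + 1 := by exact_mod_cast h
      linear_combination h'
    · have hδ' : δ ≠ γ - β := fun h => hδ (by rw [h]; abel)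
      simp [hδ, hδ']
  | zero => simp
  | add x y hx hy => simp only [lie_add, map_add, hx, hy]; split_ifs <;> ring
  | smul c x hx => simp only [lie_smul, map_smul, smul_eq_mul, hx]; split_ifs <;> ring

@[simp] lemma coeffL_H_lie (β γ : Γ) (j m : ℕ) (y : V) : hv.coeffL γ m ⁅hv.H β j, y⁆ = 0 := by
  induction y using induction_on_basis with
  | L δ k => rw [← lie_skew, hv.lie_L_H]; simp
  | H δ k => rw [hv.lie_H_H]; simp
  | zero => simp
  | add x y hx hy => simp [lie_add, hx, hy]
  | smul c x hx => simp [lie_smul, hx]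

lemma coeffH_H_lie (β γ : Γ) (j m : ℕ) (y : V) :
    hv.coeffH γ m ⁅hv.H β j, y⁆ =
      -((if j ≤ m then β * hv.coeffL (γ - β) (m - j) y else 0)
      + (if j ≤ m + 1 then j * hv.coeffL (γ - β) (m + 1 - j) y else 0)) := by
  induction y using induction_on_basis with
  | L δ k =>
    rw [← lie_skew, hv.lie_L_H, map_neg, neg_inj]
    by_cases hδ : δ + β = γ
    · subst hδ
      simp only [map_add, map_smul, coeffH_H, coeffL_L, smul_eq_mul, add_sub_cancel_right,
        true_and, mul_ite, mul_one, mul_zero, ← ite_and]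
      exact ite_add_ite_shift j k m _ _ _ (fun _ => rfl) (fun _ hj => by simp [hj])
    · have hδ' : δ ≠ γ - β := fun h => hδ (by rw [h]; abel)
      simp [hδ, hδ']
  | H δ k => rw [hv.lie_H_H]; simp
  | zero => simp
  | add x y hx hy => simp only [lie_add, map_add, hx, hy]; split_ifs <;> ring
  | smul c x hx => simp only [lie_smul, map_smul, smul_eq_mul, hx]; split_ifs <;> ring

lemma L_mem_grade (α : Γ) (i : ℕ) : hv.L α i ∈ hv.grade α :=
  Submodule.subset_span (Or.inl ⟨i, rfl⟩)

lemma H_mem_grade (α : Γ) (i : ℕ) : hv.H α i ∈ hv.grade α :=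
  Submodule.subset_span (Or.inr ⟨i, rfl⟩)

lemma coeffL_eq_zero_of_mem_grade {α γ : Γ} (h : γ ≠ α) (m : ℕ) {x : V} (hx : x ∈ hv.grade α) :
    hv.coeffL γ m x = 0 := by
  induction hx using Submodule.span_induction with
  | mem x hx => obtain ⟨i, rfl⟩ | ⟨i, rfl⟩ := hx <;> simp [Ne.symm h]
  | zero => simp
  | add x y _ _ hx hy => simp [hx, hy]
  | smul c x _ hx => simp [hx]

lemma coeffH_eq_zero_of_mem_grade {α γ : Γ} (h : γ ≠ α) (m : ℕ) {x : V} (hx : x ∈ hv.grade α) :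
    hv.coeffH γ m x = 0 := by
  induction hx using Submodule.span_induction with
  | mem x hx => obtain ⟨i, rfl⟩ | ⟨i, rfl⟩ := hx <;> simp [Ne.symm h]
  | zero => simp
  | add x y _ _ hx hy => simp [hx, hy]
  | smul c x _ hx => simp [hx]

lemma lie_mem_grade {α β : Γ} {x y : V} (hx : x ∈ hv.grade α) (hy : y ∈ hv.grade β) :
    ⁅x, y⁆ ∈ hv.grade (α + β) := by
  induction hx using Submodule.span_induction with
  | mem x hx =>
    induction hy using Submodule.span_induction with
    | mem y hy =>
      obtain ⟨i, rfl⟩ | ⟨i, rfl⟩ := hx <;> obtain ⟨j, rfl⟩ | ⟨j, rfl⟩ := hy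
      · rw [hv.lie_L_L]
        exact add_mem (Submodule.smul_mem _ _ (L_mem_grade _ _))
          (Submodule.smul_mem _ _ (L_mem_grade _ _))
      · rw [hv.lie_L_H]
        exact add_mem (Submodule.smul_mem _ _ (H_mem_grade _ _))
          (Submodule.smul_mem _ _ (H_mem_grade _ _))
      · rw [← lie_skew, hv.lie_L_H, add_comm α β]
        exact neg_mem (add_mem (Submodule.smul_mem _ _ (H_mem_grade _ _))
          (Submodule.smul_mem _ _ (H_mem_grade _ _)))
      · rw [hv.lie_H_H]
        exact zero_mem _
    | zero => simp
    | add y z _ _ hy hz => rw [lie_add]; exact add_mem hy hz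
    | smul c y _ hy => rw [lie_smul]; exact Submodule.smul_mem _ _ hy
  | zero => simp
  | add x z _ _ hx hz => rw [add_lie]; exact add_mem hx hz
  | smul c x _ hx => rw [smul_lie]; exact Submodule.smul_mem _ _ hx

lemma HasDegree.apply_mem_grade {D : LieDerivation ℂ V V} (hD : hv.HasDegree D 0) {α : Γ}
    {x : V} (hx : x ∈ hv.grade α) : D x ∈ hv.grade α := by
  simpa using hD α x hx

lemma HasDegree.sub_ad {D : LieDerivation ℂ V V} (hD : hv.HasDegree D 0) {u : V}
    (hu : u ∈ hv.grade 0) : hv.HasDegree (D - LieDerivation.ad ℂ V u) 0 := by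
  intro α x hx
  have hux : ⁅u, x⁆ ∈ hv.grade (α + 0) := by simpa [add_comm] using lie_mem_grade hu hx
  simpa using sub_mem (hD α x hx) hux

lemma exists_mem_grade_zero_lie_L_zero_eq {v : V} (hv₀ : v ∈ hv.grade 0) :
    ∃ z ∈ hv.grade 0, ⁅hv.L 0 0, z⁆ = v := by
  suffices hv.grade 0 ≤ (hv.grade 0).map (LieAlgebra.ad ℂ V (hv.L 0 0)) from this hv₀
  refine Submodule.span_le.mpr ?_
  rintro _ (⟨i, rfl⟩ | ⟨i, rfl⟩)
  · refine ⟨((i : ℂ) + 1)⁻¹ • hv.L 0 (i + 1), Submodule.smul_mem _ _ (L_mem_grade _ _), ?_⟩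
    simp [hv.lie_L_L, Nat.cast_add_one_ne_zero]
  · refine ⟨((i : ℂ) + 1)⁻¹ • hv.H 0 (i + 1), Submodule.smul_mem _ _ (H_mem_grade _ _), ?_⟩
    simp [hv.lie_L_H, Nat.cast_add_one_ne_zero]

lemma lie_L_zero_zero_L (β : Γ) (j : ℕ) :
    ⁅hv.L 0 0, hv.L β j⁆ = (β : ℂ) • hv.L β j + (j : ℂ) • hv.L β (j - 1) := by
  simp [hv.lie_L_L]

lemma lie_L_zero_zero_H (β : Γ) (j : ℕ) :
    ⁅hv.L 0 0, hv.H β j⁆ = (β : ℂ) • hv.H β j + (j : ℂ) • hv.H β (j - 1) := by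
  simp [hv.lie_L_H]

lemma coeffL_L_zero_zero_lie (γ : Γ) (m : ℕ) (y : V) :
    hv.coeffL γ m ⁅hv.L 0 0, y⁆ = γ * hv.coeffL γ m y + (m + 1) * hv.coeffL γ (m + 1) y := by
  simp [coeffL_L_lie]

lemma coeffH_L_zero_zero_lie (γ : Γ) (m : ℕ) (y : V) :
    hv.coeffH γ m ⁅hv.L 0 0, y⁆ = γ * hv.coeffH γ m y + (m + 1) * hv.coeffH γ (m + 1) y := by
  simp [coeffH_L_lie]

section Leibniz

variable (hv) (D : LieDerivation ℂ V V)

-- `leibniz_Xi_Yj α β` is the Leibniz rule for `D` on `⁅X_{α,i}, Y_{β,j}⁆`, read at one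
-- coordinate of degree `α + β`.
lemma leibniz_L1_H0 (α β : Γ) :
    (β : ℂ) * hv.coeffH (α + β) 0 (D (hv.H (α + β) 1)) = β * hv.coeffL α 0 (D (hv.L α 1)) := by
  have h := congrArg (hv.coeffH (α + β) 0) (D.apply_lie_eq_sub (hv.L α 1) (hv.H β 0))
  rw [hv.lie_L_H] at h
  linear_combination (norm := (simp [coeffH_L_lie, coeffH_H_lie]; ring_nf)) h

lemma leibniz_L0_H0 (α β : Γ) :
    (β : ℂ) * hv.coeffH (α + β) 0 (D (hv.H (α + β) 0)) = β * hv.coeffL α 0 (D (hv.L α 0))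
      + β * hv.coeffH β 0 (D (hv.H β 0)) + hv.coeffH β 1 (D (hv.H β 0)) := by
  have h := congrArg (hv.coeffH (α + β) 0) (D.apply_lie_eq_sub (hv.L α 0) (hv.H β 0))
  rw [hv.lie_L_H] at h
  linear_combination (norm := (simp [coeffH_L_lie, coeffH_H_lie]; ring_nf)) h

lemma leibniz_L1_L1 (α β : Γ) :
    ((β : ℂ) - α) * hv.coeffL (α + β) 0 (D (hv.L (α + β) 2))
      = hv.coeffL α 0 (D (hv.L α 1)) - hv.coeffL β 0 (D (hv.L β 1)) := by
  have h := congrArg (hv.coeffL (α + β) 0) (D.apply_lie_eq_sub (hv.L α 1) (hv.L β 1))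
  rw [hv.lie_L_L] at h
  linear_combination (norm := (simp [coeffL_L_lie]; ring_nf)) h

lemma leibniz_L1_L (α β : Γ) {j : ℕ} (hj : 2 ≤ j) :
    ((β : ℂ) - α) * hv.coeffL (α + β) 0 (D (hv.L (α + β) (j + 1)))
      + ((j : ℂ) - 1) * hv.coeffL (α + β) 0 (D (hv.L (α + β) j))
      = -hv.coeffL β 0 (D (hv.L β j)) := by
  have h := congrArg (hv.coeffL (α + β) 0) (D.apply_lie_eq_sub (hv.L α 1) (hv.L β j))
  rw [hv.lie_L_L, show 1 + j - 1 = j by omega, add_comm 1 j] at h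
  have hj₀ : j ≠ 0 := by omega
  have hj₁ : ¬ j ≤ 1 := by omega
  linear_combination (norm := (simp [coeffL_L_lie, hj₀, hj₁]; ring_nf)) h

lemma leibniz_L1_H1 (α β : Γ) :
    (β : ℂ) * hv.coeffH (α + β) 0 (D (hv.H (α + β) 2))
      + hv.coeffH (α + β) 0 (D (hv.H (α + β) 1)) = hv.coeffL α 0 (D (hv.L α 1)) := by
  have h := congrArg (hv.coeffH (α + β) 0) (D.apply_lie_eq_sub (hv.L α 1) (hv.H β 1))
  rw [hv.lie_L_H] at h
  linear_combination (norm := (simp [coeffH_L_lie, coeffH_H_lie]; ring_nf)) h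

lemma leibniz_L1_H (α β : Γ) {j : ℕ} (hj : 2 ≤ j) :
    (β : ℂ) * hv.coeffH (α + β) 0 (D (hv.H (α + β) (j + 1)))
      + j * hv.coeffH (α + β) 0 (D (hv.H (α + β) j)) = 0 := by
  have h := congrArg (hv.coeffH (α + β) 0) (D.apply_lie_eq_sub (hv.L α 1) (hv.H β j))
  rw [hv.lie_L_H, show 1 + j - 1 = j by omega, add_comm 1 j] at h
  have hj₀ : j ≠ 0 := by omega
  have hj₁ : ¬ j ≤ 1 := by omega
  linear_combination (norm := simp [coeffH_L_lie, coeffH_H_lie, hj₀, hj₁]) h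

lemma leibniz_L0_L0 (α β : Γ) :
    ((β : ℂ) - α) * hv.coeffH (α + β) 0 (D (hv.L (α + β) 0))
      = -α * hv.coeffH α 0 (D (hv.L α 0)) - hv.coeffH α 1 (D (hv.L α 0))
        + β * hv.coeffH β 0 (D (hv.L β 0)) + hv.coeffH β 1 (D (hv.L β 0)) := by
  have h := congrArg (hv.coeffH (α + β) 0) (D.apply_lie_eq_sub (hv.L α 0) (hv.L β 0))
  rw [hv.lie_L_L] at h
  linear_combination (norm := (simp [coeffH_L_lie]; ring_nf)) h

lemma leibniz_L_L0 (α β : Γ) {i : ℕ} (hi : 1 ≤ i) :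
    ((β : ℂ) - α) * hv.coeffH (α + β) 0 (D (hv.L (α + β) i))
      - i * hv.coeffH (α + β) 0 (D (hv.L (α + β) (i - 1)))
      = -α * hv.coeffH α 0 (D (hv.L α i)) - hv.coeffH α 1 (D (hv.L α i)) := by
  have h := congrArg (hv.coeffH (α + β) 0) (D.apply_lie_eq_sub (hv.L α i) (hv.L β 0))
  rw [hv.lie_L_L] at h
  have hβ : (if i ≤ 1 then (1 - (i : ℂ)) * hv.coeffH β (1 - i) (D (hv.L β 0)) else 0) = 0 := by
    split_ifs with hi₁
    · obtain rfl : i = 1 := by omega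
      simp
    · rfl
  linear_combination (norm := (simp [coeffH_L_lie, show i ≠ 0 by omega]; ring_nf)) h + hβ

lemma leibniz_H_H0 (α β : Γ) (i m : ℕ) :
    (β : ℂ) * hv.coeffL α m (D (hv.H α i)) =
      (if i ≤ m then α * hv.coeffL β (m - i) (D (hv.H β 0)) else 0)
      + (if i ≤ m + 1 then i * hv.coeffL β (m + 1 - i) (D (hv.H β 0)) else 0) := by
  have h := congrArg (hv.coeffH (α + β) m) (D.apply_lie_eq_sub (hv.H α i) (hv.H β 0))
  rw [hv.lie_H_H] at h
  linear_combination (norm := (simp [coeffH_H_lie]; ring)) -h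

lemma leibniz_L0_H0_coeffL (α β : Γ) (m : ℕ) :
    (β : ℂ) * hv.coeffL (α + β) m (D (hv.H (α + β) 0))
      = (β - α) * hv.coeffL β m (D (hv.H β 0))
        + (m + 1) * hv.coeffL β (m + 1) (D (hv.H β 0)) := by
  have h := congrArg (hv.coeffL (α + β) m) (D.apply_lie_eq_sub (hv.L α 0) (hv.H β 0))
  rw [hv.lie_L_H] at h
  linear_combination (norm := (simp [coeffL_L_lie]; ring_nf)) h

end Leibniz

section Derivation

variable {D : LieDerivation ℂ V V}

/-- Since `D` kills `L_{0,0}`, it commutes with `ad L_{0,0}`. -/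
lemma coeff_apply_succ (hD₀ : D (hv.L 0 0) = 0) {X : ℕ → V} {κ : ℕ → V →ₗ[ℂ] ℂ} {c : ℂ}
    (hX : ∀ j, ⁅hv.L 0 0, X j⁆ = c • X j + (j : ℂ) • X (j - 1))
    (hκ : ∀ m y, κ m ⁅hv.L 0 0, y⁆ = c * κ m y + (m + 1) * κ (m + 1) y) (j m : ℕ) :
    (j : ℂ) * κ m (D (X (j - 1))) = (m + 1) * κ (m + 1) (D (X j)) := by
  have h := congrArg (κ m) (D.apply_lie_eq_sub (hv.L 0 0) (X j))
  simp only [hD₀, lie_zero, sub_zero, hX, hκ, map_add, map_smul, smul_eq_mul] at h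
  linear_combination h

lemma coeff_apply_eq (hD₀ : D (hv.L 0 0) = 0) {X : ℕ → V} {κ : ℕ → V →ₗ[ℂ] ℂ} {c : ℂ}
    (hX : ∀ j, ⁅hv.L 0 0, X j⁆ = c • X j + (j : ℂ) • X (j - 1))
    (hκ : ∀ m y, κ m ⁅hv.L 0 0, y⁆ = c * κ m y + (m + 1) * κ (m + 1) y)
    (hhigh : ∀ i, 2 ≤ i → κ 0 (D (X i)) = 0) (i m : ℕ) :
    κ m (D (X i)) =
      (if m = i then κ 0 (D (X 0)) else 0) + (if m + 1 = i then i * κ 0 (D (X 1)) else 0) :=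
  eq_of_row_zero_of_rec (fun i m => κ m (D (X i))) (coeff_apply_succ hD₀ hX hκ) hhigh i m

lemma coeffH_zero_apply_H_one_add {β : Γ} (hβ : β ≠ 0) (α : Γ) :
    hv.coeffH (α + β) 0 (D (hv.H (α + β) 1)) = hv.coeffL α 0 (D (hv.L α 1)) :=
  mul_left_cancel₀ (by simpa using hβ) (hv.leibniz_L1_H0 D α β)

lemma coeffL_succ_apply_H_zero (α β : Γ) (m : ℕ) :
    2 * (α : ℂ) * hv.coeffL β m (D (hv.H β 0))
      = (m + 1) * hv.coeffL β (m + 1) (D (hv.H β 0)) := by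
  have h₁ := hv.leibniz_H_H0 D (α + β) β 0 m
  have h₂ := hv.leibniz_L0_H0_coeffL D α β m
  simp only [zero_le, ↓reduceIte, tsub_zero, CharP.cast_eq_zero, zero_mul, add_zero,
    AddSubgroup.coe_add] at h₁
  linear_combination h₂ - h₁

lemma coeffH_one_apply_L (hD₀ : D (hv.L 0 0) = 0) (α : Γ) (i : ℕ) :
    hv.coeffH α 1 (D (hv.L α i)) = i * hv.coeffH α 0 (D (hv.L α (i - 1))) := by
  simpa using (coeff_apply_succ hD₀ (lie_L_zero_zero_L α) (coeffH_L_zero_zero_lie α) i 0).symm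

lemma coeffH_one_apply_H_zero (hD₀ : D (hv.L 0 0) = 0) (β : Γ) :
    hv.coeffH β 1 (D (hv.H β 0)) = 0 := by
  simpa using (coeff_apply_succ hD₀ (lie_L_zero_zero_H β) (coeffH_L_zero_zero_lie β) 0 0).symm

lemma coeffH_zero_apply_L_zero_eq_mul (hD₀ : D (hv.L 0 0) = 0) {x : Γ} (hx : x ≠ 0) (y : Γ) :
    hv.coeffH y 0 (D (hv.L y 0)) = hv.coeffH x 0 (D (hv.L x 0)) / x * y := by
  refine eq_mul_of_sub_mul_apply_add_eq (g := fun α => hv.coeffH α 0 (D (hv.L α 0)))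
    (by simp [hD₀]) (fun α β => ?_) hx y
  have h := hv.leibniz_L0_L0 D α β
  simp only [coeffH_one_apply_L hD₀, CharP.cast_eq_zero, zero_mul] at h
  linear_combination h

lemma coeffH_zero_apply_H_zero_add (hD₀ : D (hv.L 0 0) = 0) {β : Γ} (hβ : β ≠ 0) (α : Γ) :
    hv.coeffH (α + β) 0 (D (hv.H (α + β) 0))
      = hv.coeffL α 0 (D (hv.L α 0)) + hv.coeffH β 0 (D (hv.H β 0)) := by
  have h := hv.leibniz_L0_H0 D α β
  rw [coeffH_one_apply_H_zero hD₀, add_zero] at h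
  exact mul_left_cancel₀ (show (β : ℂ) ≠ 0 by simpa using hβ) (by linear_combination h)

variable [Nontrivial Γ]

lemma coeffL_zero_apply_L_one (α : Γ) :
    hv.coeffL α 0 (D (hv.L α 1)) = hv.coeffL 0 0 (D (hv.L 0 1)) := by
  obtain ⟨β, hβ, hαβ⟩ := exists_ne_zero_add_ne_zero α
  rw [← coeffH_zero_apply_H_one_add hβ α, ← coeffH_zero_apply_H_one_add hαβ 0, zero_add]

lemma coeffH_zero_apply_H_one (γ : Γ) :
    hv.coeffH γ 0 (D (hv.H γ 1)) = hv.coeffL 0 0 (D (hv.L 0 1)) := by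
  obtain ⟨β, hβ⟩ := exists_ne (0 : Γ)
  rw [← coeffL_zero_apply_L_one (γ - β), ← coeffH_zero_apply_H_one_add hβ, sub_add_cancel]

lemma coeffL_zero_apply_L_eq_zero {n : ℕ} (hn : 2 ≤ n) (γ : Γ) : hv.coeffL γ 0 (D (hv.L γ n)) = 0 := by
  induction n, hn using Nat.le_induction generalizing γ with
  | base =>
    obtain ⟨α, β, rfl, hαβ⟩ := exists_add_eq_of_ne γ
    have h := hv.leibniz_L1_L1 D α β
    rw [coeffL_zero_apply_L_one α, coeffL_zero_apply_L_one β, sub_self] at h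
    exact (mul_eq_zero.mp h).resolve_left (sub_ne_zero.mpr (by simpa using hαβ.symm))
  | succ n hn ih =>
    obtain ⟨α, β, rfl, hαβ⟩ := exists_add_eq_of_ne γ
    have h := hv.leibniz_L1_L D α β hn
    rw [ih, ih, mul_zero, add_zero, neg_zero] at h
    exact (mul_eq_zero.mp h).resolve_left (sub_ne_zero.mpr (by simpa using hαβ.symm))

lemma coeffH_zero_apply_H_eq_zero {n : ℕ} (hn : 2 ≤ n) (γ : Γ) : hv.coeffH γ 0 (D (hv.H γ n)) = 0 := by
  obtain ⟨β, hβ⟩ := exists_ne (0 : Γ)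
  have hβ' : (β : ℂ) ≠ 0 := by simpa using hβ
  induction n, hn using Nat.le_induction generalizing γ with
  | base =>
    have h := hv.leibniz_L1_H1 D (γ - β) β
    rw [sub_add_cancel, coeffH_zero_apply_H_one, coeffL_zero_apply_L_one (γ - β), add_eq_right] at h
    exact (mul_eq_zero.mp h).resolve_left hβ'
  | succ n hn ih =>
    have h := hv.leibniz_L1_H D (γ - β) β hn
    rw [sub_add_cancel, ih, mul_zero, add_zero] at h
    exact (mul_eq_zero.mp h).resolve_left hβ'

lemma coeffL_apply_H (α : Γ) (i m : ℕ) : hv.coeffL α m (D (hv.H α i)) = 0 := by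
  obtain ⟨β, hβ⟩ := exists_ne (0 : Γ)
  have hβ' : (β : ℂ) ≠ 0 := by simpa using hβ
  have hsucc : ∀ n, hv.coeffL β (n + 1) (D (hv.H β 0)) = 0 := fun n => by
    simpa [Nat.cast_add_one_ne_zero] using
      (coeffL_succ_apply_H_zero (hv := hv) (D := D) 0 β n).symm
  have hzero : ∀ n, hv.coeffL β n (D (hv.H β 0)) = 0 := fun n => by
    simpa [hsucc, hβ'] using coeffL_succ_apply_H_zero (hv := hv) (D := D) β β n
  simpa [hzero, hβ'] using hv.leibniz_H_H0 D α β i m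

lemma coeffH_zero_apply_L_one_eq_div (hD₀ : D (hv.L 0 0) = 0) {x : Γ} (hx : x ≠ 0) (δ : Γ) :
    hv.coeffH δ 0 (D (hv.L δ 1)) = hv.coeffH x 0 (D (hv.L x 0)) / x := by
  set k := hv.coeffH x 0 (D (hv.L x 0)) / x
  suffices hX : hv.coeffH δ 0 (D (hv.L δ 1)) - k = 0 from sub_eq_zero.mp hX
  refine eq_zero_of_sub_mul_apply_add_eq (X := fun δ => hv.coeffH δ 0 (D (hv.L δ 1)) - k)
    (fun α β => ?_) δ
  have h := hv.leibniz_L_L0 D α β le_rfl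
  simp only [coeffH_one_apply_L hD₀, Nat.sub_self, Nat.cast_one, one_mul,
    coeffH_zero_apply_L_zero_eq_mul hD₀ hx (α + β), coeffH_zero_apply_L_zero_eq_mul hD₀ hx α] at h
  push_cast at h
  linear_combination h

lemma coeffH_zero_apply_L_one (hD₀ : D (hv.L 0 0) = 0) (δ : Γ) :
    hv.coeffH δ 0 (D (hv.L δ 1)) = hv.coeffH 0 0 (D (hv.L 0 1)) := by
  obtain ⟨x, hx⟩ := exists_ne (0 : Γ)
  rw [coeffH_zero_apply_L_one_eq_div hD₀ hx δ, coeffH_zero_apply_L_one_eq_div hD₀ hx 0]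

lemma coeffH_zero_apply_L_zero (hD₀ : D (hv.L 0 0) = 0) (γ : Γ) :
    hv.coeffH γ 0 (D (hv.L γ 0)) = hv.coeffH 0 0 (D (hv.L 0 1)) * γ := by
  obtain ⟨x, hx⟩ := exists_ne (0 : Γ)
  rw [coeffH_zero_apply_L_zero_eq_mul hD₀ hx γ, coeffH_zero_apply_L_one_eq_div hD₀ hx 0]

lemma coeffH_zero_apply_L_eq_zero (hD₀ : D (hv.L 0 0) = 0) {n : ℕ} (hn : 2 ≤ n) (δ : Γ) :
    hv.coeffH δ 0 (D (hv.L δ n)) = 0 := by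
  obtain ⟨x, hx⟩ := exists_ne (0 : Γ)
  induction n, hn using Nat.le_induction generalizing δ with
  | base =>
    refine eq_zero_of_sub_mul_apply_add_eq (X := fun δ => hv.coeffH δ 0 (D (hv.L δ 2)))
      (fun α β => ?_) δ
    have h := hv.leibniz_L_L0 D α β (i := 2) (by norm_num)
    simp only [coeffH_one_apply_L hD₀, Nat.add_one_sub_one, coeffH_zero_apply_L_one_eq_div hD₀ hx] at h
    linear_combination h
  | succ n hn ih =>
    refine eq_zero_of_sub_mul_apply_add_eq (X := fun δ => hv.coeffH δ 0 (D (hv.L δ (n + 1))))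
      (fun α β => ?_) δ
    have h := hv.leibniz_L_L0 D α β (i := n + 1) (by omega)
    simp only [coeffH_one_apply_L hD₀, Nat.add_sub_cancel, ih, mul_zero, sub_zero] at h
    linear_combination h

lemma coeffL_zero_apply_L_zero_add (hD₀ : D (hv.L 0 0) = 0) (α β : Γ) :
    hv.coeffL (α + β) 0 (D (hv.L (α + β) 0))
      = hv.coeffL α 0 (D (hv.L α 0)) + hv.coeffL β 0 (D (hv.L β 0)) := by
  obtain ⟨δ, hδ, hβδ⟩ := exists_ne_zero_add_ne_zero β
  have h := coeffH_zero_apply_H_zero_add hD₀ hβδ α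
  rw [← add_assoc, coeffH_zero_apply_H_zero_add hD₀ hδ (α + β), coeffH_zero_apply_H_zero_add hD₀ hδ β] at h
  linear_combination h

lemma coeffH_zero_apply_H_zero (hD₀ : D (hv.L 0 0) = 0) (γ : Γ) :
    hv.coeffH γ 0 (D (hv.H γ 0))
      = hv.coeffL γ 0 (D (hv.L γ 0)) + hv.coeffH 0 0 (D (hv.H 0 0)) := by
  obtain ⟨β, hβ⟩ := exists_ne (0 : Γ)
  have h₁ := coeffH_zero_apply_H_zero_add hD₀ hβ (γ - β)
  have h₂ := coeffH_zero_apply_H_zero_add hD₀ hβ (-β)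
  have h₃ := coeffL_zero_apply_L_zero_add hD₀ (γ - β) β
  have h₄ := coeffL_zero_apply_L_zero_add hD₀ (-β) β
  rw [sub_add_cancel] at h₁ h₃
  rw [neg_add_cancel] at h₂ h₄
  rw [hD₀, map_zero] at h₄
  linear_combination h₁ - h₂ - h₃ + h₄

lemma apply_L_eq (hD : hv.HasDegree D 0) (hD₀ : D (hv.L 0 0) = 0) (α : Γ) (i : ℕ) :
    D (hv.L α i) = ⁅hv.coeffL 0 0 (D (hv.L 0 1)) • hv.L 0 0, hv.L α i⁆
      + (hv.coeffL α 0 (D (hv.L α 0)) - hv.coeffL 0 0 (D (hv.L 0 1)) * α) • hv.L α i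
      + hv.coeffH 0 0 (D (hv.L 0 1)) • ((α : ℂ) • hv.H α i + (i : ℂ) • hv.H α (i - 1)) := by
  have hmem := hD.apply_mem_grade (L_mem_grade α i)
  rw [smul_lie, lie_L_zero_zero_L]
  refine hv.ext_coeff (fun γ m => ?_) (fun γ m => ?_)
  · by_cases hγ : γ = α
    · subst hγ
      rw [coeff_apply_eq hD₀ (lie_L_zero_zero_L γ) (coeffL_L_zero_zero_lie γ)
        (fun n hn => coeffL_zero_apply_L_eq_zero hn γ), coeffL_zero_apply_L_one γ]
      rcases i with _ | i <;> simp <;> split_ifs <;> first | omega | ring1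
    · rw [coeffL_eq_zero_of_mem_grade hγ m hmem]
      simp [Ne.symm hγ]
  · by_cases hγ : γ = α
    · subst hγ
      rw [coeff_apply_eq hD₀ (lie_L_zero_zero_L γ) (coeffH_L_zero_zero_lie γ)
        (fun n hn => coeffH_zero_apply_L_eq_zero hD₀ hn γ), coeffH_zero_apply_L_zero hD₀, coeffH_zero_apply_L_one hD₀ γ]
      rcases i with _ | i <;> simp <;> split_ifs <;> first | omega | ring1
    · rw [coeffH_eq_zero_of_mem_grade hγ m hmem]
      simp [Ne.symm hγ]

lemma apply_H_eq (hD : hv.HasDegree D 0) (hD₀ : D (hv.L 0 0) = 0) (α : Γ) (i : ℕ) :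
    D (hv.H α i) = ⁅hv.coeffL 0 0 (D (hv.L 0 1)) • hv.L 0 0, hv.H α i⁆
      + (hv.coeffL α 0 (D (hv.L α 0)) - hv.coeffL 0 0 (D (hv.L 0 1)) * α) • hv.H α i
      + hv.coeffH 0 0 (D (hv.H 0 0)) • hv.H α i := by
  have hmem := hD.apply_mem_grade (H_mem_grade α i)
  rw [smul_lie, lie_L_zero_zero_H]
  refine hv.ext_coeff (fun γ m => ?_) (fun γ m => ?_)
  · by_cases hγ : γ = α
    · subst hγ
      simp [coeffL_apply_H]
    · rw [coeffL_eq_zero_of_mem_grade hγ m hmem]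
      simp
  · by_cases hγ : γ = α
    · subst hγ
      rw [coeff_apply_eq hD₀ (lie_L_zero_zero_H γ) (coeffH_L_zero_zero_lie γ)
        (fun n hn => coeffH_zero_apply_H_eq_zero hn γ), coeffH_zero_apply_H_zero hD₀ γ, coeffH_zero_apply_H_one γ]
      rcases i with _ | i <;> simp <;> split_ifs <;> first | omega | ring1
    · rw [coeffH_eq_zero_of_mem_grade hγ m hmem]
      simp [Ne.symm hγ]

end Derivation

/-- `D` agrees on the basis with `ad_u + D_φ + c₁ D₁ + c₂ D₂`. -/
def DecomposesAs (hv : HVData Γ V) (D : V → V) (u : V) (φ : Γ → ℂ) (c₁ c₂ : ℂ) : Prop :=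
  (∀ (α : Γ) (i : ℕ), D (hv.L α i) = ⁅u, hv.L α i⁆ + φ α • hv.L α i
      + c₁ • ((α : ℂ) • hv.H α i + (i : ℂ) • hv.H α (i - 1))) ∧
    ∀ (α : Γ) (i : ℕ), D (hv.H α i) = ⁅u, hv.H α i⁆ + φ α • hv.H α i + c₂ • hv.H α i

lemma DecomposesAs.of_sub_ad {D : LieDerivation ℂ V V} {z u : V} {φ : Γ → ℂ} {c₁ c₂ : ℂ}
    (h : hv.DecomposesAs (D - LieDerivation.ad ℂ V z) u φ c₁ c₂) :
    hv.DecomposesAs D (z + u) φ c₁ c₂ := by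
  refine ⟨fun α i => ?_, fun α i => ?_⟩
  · have h₁ := h.1 α i
    simp only [Pi.sub_apply, LieDerivation.ad_apply_apply] at h₁
    rw [add_lie]
    linear_combination (norm := module) h₁
  · have h₂ := h.2 α i
    simp only [Pi.sub_apply, LieDerivation.ad_apply_apply] at h₂
    rw [add_lie]
    linear_combination (norm := module) h₂

lemma DecomposesAs.sub {D : V → V} {u u' : V} {φ φ' : Γ → ℂ} {c₁ c₂ c₁' c₂' : ℂ}
    (h : hv.DecomposesAs D u φ c₁ c₂) (h' : hv.DecomposesAs D u' φ' c₁' c₂') :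
    hv.DecomposesAs 0 (u - u') (φ - φ') (c₁ - c₁') (c₂ - c₂') := by
  refine ⟨fun α i => ?_, fun α i => ?_⟩
  · rw [Pi.zero_apply, sub_lie, Pi.sub_apply]
    linear_combination (norm := module) h.1 α i - h'.1 α i
  · rw [Pi.zero_apply, sub_lie, Pi.sub_apply]
    linear_combination (norm := module) h.2 α i - h'.2 α i

lemma DecomposesAs.lie_eq_zero {w : V} (h : hv.DecomposesAs 0 w 0 0 0) (x : V) :
    ⁅w, x⁆ = 0 := by
  induction x using induction_on_basis with
  | L α i => simpa [eq_comm] using h.1 α i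
  | H α i => simpa [eq_comm] using h.2 α i
  | zero => simp
  | add x y hx hy => rw [lie_add, hx, hy, add_zero]
  | smul c x hx => rw [lie_smul, hx, smul_zero]

variable [Nontrivial Γ]

lemma DecomposesAs.eq_zero {w : V} {φ : Γ → ℂ} {c₁ c₂ : ℂ}
    (h : hv.DecomposesAs 0 w φ c₁ c₂) : (∀ x : V, ⁅w, x⁆ = 0) ∧ φ = 0 ∧ c₁ = 0 ∧ c₂ = 0 := by
  obtain ⟨β, hβ⟩ := exists_ne (0 : Γ)
  have hβ' : (β : ℂ) ≠ 0 := by simpa using hβ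
  have hL (α : Γ) (m : ℕ) : (α : ℂ) * hv.coeffL 0 m w - (m + 1) * hv.coeffL 0 (m + 1) w
      + (if 0 = m then φ α else 0) = 0 := by
    have h₁ := congrArg (hv.coeffL α m) (h.1 α 0)
    rw [← lie_skew w] at h₁
    linear_combination (norm := (simp [coeffL_L_lie, -lie_skew]; ring_nf)) -h₁
  have hL' (α : Γ) : c₁ * α = hv.coeffH 0 1 w := by
    have h₁ := congrArg (hv.coeffH α 0) (h.1 α 0)
    rw [← lie_skew w] at h₁
    linear_combination (norm := simp [coeffH_L_lie, -lie_skew]) -h₁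
  have hH₀ : φ 0 + c₂ = 0 := by
    have h₁ := congrArg (hv.coeffH 0 0) (h.2 0 0)
    rw [← lie_skew w] at h₁
    linear_combination (norm := simp [coeffH_H_lie, -lie_skew]) -h₁
  have hw₀ : hv.coeffL 0 0 w = 0 := by
    have h₁ := congrArg (hv.coeffH 0 0) (h.2 0 1)
    rw [← lie_skew w] at h₁
    simpa [coeffH_H_lie, -lie_skew] using h₁.symm
  have hw₂ (m : ℕ) : hv.coeffL 0 (m + 2) w = 0 := by
    have hm : (m : ℂ) + 1 + 1 ≠ 0 := by exact_mod_cast Nat.succ_ne_zero (m + 1)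
    simpa [hm] using hL 0 (m + 1)
  have hw₁ : hv.coeffL 0 1 w = 0 := by
    simpa [hw₂, hβ'] using hL β 1
  have hφ : φ = 0 := funext fun α => by simpa [hw₀, hw₁] using hL α 0
  have hc₁ : c₁ = 0 := by
    have h₀ : hv.coeffH 0 1 w = 0 := by simpa using (hL' 0).symm
    simpa [h₀, hβ'] using hL' β
  have hc₂ : c₂ = 0 := by simpa [hφ] using hH₀
  subst hφ hc₁ hc₂
  exact ⟨h.lie_eq_zero, rfl, rfl, rfl⟩

lemma DecomposesAs.unique {D : V → V} {u u' : V} {φ φ' : Γ → ℂ} {c₁ c₂ c₁' c₂' : ℂ}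
    (h : hv.DecomposesAs D u φ c₁ c₂) (h' : hv.DecomposesAs D u' φ' c₁' c₂') :
    (∀ x : V, ⁅u, x⁆ = ⁅u', x⁆) ∧ φ = φ' ∧ c₁ = c₁' ∧ c₂ = c₂' := by
  obtain ⟨hw, hφ, hc₁, hc₂⟩ := (h.sub h').eq_zero
  exact ⟨fun x => sub_eq_zero.mp (by rw [← sub_lie, hw]), sub_eq_zero.mp hφ,
    sub_eq_zero.mp hc₁, sub_eq_zero.mp hc₂⟩

lemma exists_decomposesAs {D : LieDerivation ℂ V V} (hD : hv.HasDegree D 0) :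
    ∃ u ∈ hv.grade 0, ∃ (φ : Γ →+ ℂ) (c₁ c₂ : ℂ), hv.DecomposesAs D u φ c₁ c₂ := by
  obtain ⟨z, hz, hzD⟩ :=
    exists_mem_grade_zero_lie_L_zero_eq (hD.apply_mem_grade (L_mem_grade (hv := hv) 0 0))
  set D' := D - LieDerivation.ad ℂ V (-z)
  have hD' : hv.HasDegree D' 0 := hD.sub_ad (neg_mem hz)
  have hD'₀ : D' (hv.L 0 0) = 0 := by
    rw [LieDerivation.sub_apply, LieDerivation.ad_apply_apply, ← hzD, neg_lie, lie_skew,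
      sub_self]
  set l := hv.coeffL 0 0 (D' (hv.L 0 1))
  let φ : Γ →+ ℂ := AddMonoidHom.mk' (fun α => hv.coeffL α 0 (D' (hv.L α 0)) - l * α)
    fun α β => by rw [coeffL_zero_apply_L_zero_add hD'₀]; push_cast; ring
  exact ⟨-z + l • hv.L 0 0, add_mem (neg_mem hz) (Submodule.smul_mem _ _ (L_mem_grade 0 0)),
    φ, _, _, DecomposesAs.of_sub_ad ⟨apply_L_eq hD' hD'₀, apply_H_eq hD' hD'₀⟩⟩

end HVData

/-- `(Der HV)₀ = (ad HV)₀ ⊕ Hom_ℤ(Γ,ℂ) ⊕ ℂD₁ ⊕ ℂD₂`: every degree-0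
derivation of `HV` is uniquely `ad_u + D_φ + c₁ D₁ + c₂ D₂` with `u ∈ HV₀` (uniqueness of the
operator `ad_u`, of `φ` and of the scalars `c₁, c₂`). -/
theorem HV_degree_zero_derivations (Γ : AddSubgroup ℂ) (hΓ : Γ ≠ ⊥)
    {V : Type*} [LieRing V] [LieAlgebra ℂ V] (hv : HVData Γ V)
    (D : LieDerivation ℂ V V) (hdeg : hv.HasDegree D 0) :
    ∃ (u : V) (_ : u ∈ hv.grade 0) (φ : ↥Γ →+ ℂ) (c₁ c₂ : ℂ),
      (∀ (α : Γ) (i : ℕ), D (hv.L α i) = ⁅u, hv.L α i⁆ + φ α • hv.L α i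
          + c₁ • ((α : ℂ) • hv.H α i + (i : ℂ) • hv.H α (i - 1))) ∧
      (∀ (α : Γ) (i : ℕ), D (hv.H α i) = ⁅u, hv.H α i⁆ + φ α • hv.H α i + c₂ • hv.H α i) ∧
      ∀ u' : V, u' ∈ hv.grade 0 → ∀ (φ' : ↥Γ →+ ℂ) (c₁' c₂' : ℂ),
        ((∀ (α : Γ) (i : ℕ), D (hv.L α i) = ⁅u', hv.L α i⁆ + φ' α • hv.L α i
            + c₁' • ((α : ℂ) • hv.H α i + (i : ℂ) • hv.H α (i - 1))) ∧
         (∀ (α : Γ) (i : ℕ), D (hv.H α i)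
            = ⁅u', hv.H α i⁆ + φ' α • hv.H α i + c₂' • hv.H α i)) →
        (∀ x : V, ⁅u, x⁆ = ⁅u', x⁆) ∧ φ = φ' ∧ c₁ = c₁' ∧ c₂ = c₂' := by
  have : Nontrivial Γ := (AddSubgroup.nontrivial_iff_ne_bot Γ).mpr hΓ
  obtain ⟨u, hu, φ, c₁, c₂, h⟩ := HVData.exists_decomposesAs hdeg
  refine ⟨u, hu, φ, c₁, c₂, h.1, h.2, fun u' _ φ' c₁' c₂' h' => ?_⟩
  obtain ⟨hu', hφ, hc₁, hc₂⟩ := h.unique h'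
  exact ⟨hu', DFunLike.coe_injective hφ, hc₁, hc₂⟩
end

section
/- Let σ be a Lie algebra automorphism of HV, c ∈ ℂ*, and τ: Γ → ℂ* a character such that σ(L_{α,0}) − c⁻¹ τ(α) L_{cα,0} ∈ H for all α ∈ Γ (with cΓ = Γ). Then there exists e ∈ ℂ* such that σ(H_{α,0}) = τ(α) e H_{cα,0} for all α ∈ Γ. -/
/-- The value in `ℂ` of a character `τ : Γ → ℂ*` at `α ∈ Γ`. -/
noncomputable def charVal {Γ : AddSubgroup ℂ} (τ : Multiplicative ↥Γ →* ℂˣ) (α : Γ) : ℂ :=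
  (τ (Multiplicative.ofAdd α) : ℂ)

/-!
Write `w = σ(H_{α,0})`. Since `σ(L_{0,0}) ≡ c⁻¹ L_{0,0}` modulo the abelian ideal `H`, `w` is an
eigenvector of `ad L_{0,0}` with eigenvalue `cα` modulo `H`. On coordinates `ad L_{0,0}` acts by
`g_{γ,i} ↦ γ g_{γ,i} + (i + 1) g_{γ,i+1}`; as `w` has finite support, this forces
`w ≡ t L_{cα,0}` modulo `H`. Now `ad (H_{α,0})² = 0`, hence `ad w² = 0`, whereas
`ad w² H_{β,0} = t² β (cα + β) H_{2cα+β,0}`; so `t = 0`, `w ∈ H` is a true eigenvector, and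
`w = f(α) H_{cα,0}`. Applying `σ` to `[L_{β,0}, H_{α,0}] = α H_{α+β,0}` gives
`f(α + β) = τ(β) f(α)` for `α ≠ 0`, so `f = e τ`.
-/

theorem eq_zero_of_recurrence {R : Type*} [Semiring R] [NoZeroDivisors R] {g a : ℕ → R} {μ : R}
    (hμ : μ ≠ 0) {N : ℕ} (hN : ∀ i, N ≤ i → g i = 0) (hrec : ∀ i, μ * g i + a i * g (i + 1) = 0)
    (i : ℕ) : g i = 0 := by
  induction h : N - i generalizing i with
  | zero => exact hN i (by omega)
  | succ m ih =>
    have := hrec i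
    rw [ih (i + 1) (by omega), mul_zero, add_zero] at this
    exact (mul_eq_zero.1 this).resolve_left hμ

theorem exists_ne_zero_and_add_ne_zero {Γ : AddSubgroup ℂ} (hΓ : Γ ≠ ⊥) (z : ℂ) :
    ∃ β : Γ, (β : ℂ) ≠ 0 ∧ z + β ≠ 0 := by
  obtain ⟨γ, hγ⟩ := AddSubgroup.ne_bot_iff_exists_ne_zero.1 hΓ
  replace hγ : (γ : ℂ) ≠ 0 := fun h => hγ (Subtype.ext h)
  by_cases hz : z + γ = 0
  · refine ⟨γ + γ, ?_, ?_⟩ <;> push_cast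
    · simpa using hγ
    · intro h
      exact hγ (by linear_combination h - hz)
  · exact ⟨γ, hγ, hz⟩

namespace HVData

variable {Γ : AddSubgroup ℂ} {V : Type*} [LieRing V] [LieAlgebra ℂ V] (hv : HVData Γ V)

theorem H_mem_Hspan (γ : Γ) (j : ℕ) : hv.H γ j ∈ hv.Hspan :=
  Submodule.subset_span ⟨(γ, j), rfl⟩

theorem H_ne_zero (γ : Γ) (i : ℕ) : hv.H γ i ≠ 0 :=
  hv.basis_inr γ i ▸ hv.basis.ne_zero _

theorem smul_H_injective (γ : Γ) (i : ℕ) : Function.Injective fun x : ℂ => x • hv.H γ i :=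
  smul_left_injective ℂ (hv.H_ne_zero γ i)

theorem repr_L (γ : Γ) (i : ℕ) : hv.basis.repr (hv.L γ i) = Finsupp.single (Sum.inl (γ, i)) 1 := by
  rw [← hv.basis_inl, Module.Basis.repr_self]

theorem repr_H (γ : Γ) (i : ℕ) : hv.basis.repr (hv.H γ i) = Finsupp.single (Sum.inr (γ, i)) 1 := by
  rw [← hv.basis_inr, Module.Basis.repr_self]

theorem mem_Hspan_iff (x : V) :
    x ∈ hv.Hspan ↔ ∀ p : Γ × ℕ, hv.basis.repr x (Sum.inl p) = 0 := by
  have : hv.Hspan = Submodule.span ℂ (hv.basis '' Set.range Sum.inr) := by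
    rw [Hspan, ← Set.range_comp]
    congr
    ext ⟨α, i⟩
    exact (hv.basis_inr α i).symm
  rw [this, Module.Basis.mem_span_image]
  simp [Set.subset_def, Sum.forall]

theorem lie_L_H_zero (α β : Γ) : ⁅hv.L α 0, hv.H β 0⁆ = (β : ℂ) • hv.H (α + β) 0 := by
  simp [hv.lie_L_H]

-- `k` selects the `L`-coordinates or the `H`-coordinates: `ad L_{0,0}` acts on both alike.
theorem repr_lie_L_zero_zero {k : Γ × ℕ → (Γ × ℕ) ⊕ (Γ × ℕ)} (hk : k = Sum.inl ∨ k = Sum.inr)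
    (w : V) (γ : Γ) (i : ℕ) :
    hv.basis.repr ⁅hv.L 0 0, w⁆ (k (γ, i))
      = γ * hv.basis.repr w (k (γ, i)) + (i + 1) * hv.basis.repr w (k (γ, i + 1)) := by
  suffices (hv.basis.coord (k (γ, i))).comp (LieAlgebra.ad ℂ V (hv.L 0 0) : V →ₗ[ℂ] V)
      = (γ : ℂ) • hv.basis.coord (k (γ, i)) + ((i : ℂ) + 1) • hv.basis.coord (k (γ, i + 1)) from
    congr($this w)
  refine hv.basis.ext fun s => ?_
  rcases hk with rfl | rfl <;> rcases s with ⟨δ, j⟩ | ⟨δ, j⟩ <;>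
    simp [hv.basis_inl, hv.basis_inr, hv.lie_L_L, hv.lie_L_H, repr_L, repr_H, Finsupp.single_apply]
  all_goals
    rcases eq_or_ne δ γ with rfl | hδ
    · cases j <;> simp +contextual [eq_comm (a := i)]
    · simp [hδ]

theorem lie_mem_Hspan (x : V) {y : V} (hy : y ∈ hv.Hspan) : ⁅x, y⁆ ∈ hv.Hspan := by
  have hx : x ∈ Submodule.span ℂ (Set.range hv.basis) := by simp
  induction hx, hy using Submodule.span_induction₂ with
  | mem_mem x y hx hy =>
    obtain ⟨⟨β, j⟩, rfl⟩ := hy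
    obtain ⟨⟨α, i⟩ | ⟨α, i⟩, rfl⟩ := hx
    · rw [hv.basis_inl, hv.lie_L_H]
      exact add_mem (Submodule.smul_mem _ _ (hv.H_mem_Hspan _ _))
        (Submodule.smul_mem _ _ (hv.H_mem_Hspan _ _))
    · simp [hv.basis_inr, hv.lie_H_H]
  | zero_left => simp
  | zero_right => simp
  | add_left _ _ _ _ _ _ h₁ h₂ => rw [add_lie]; exact add_mem h₁ h₂
  | add_right _ _ _ _ _ _ h₁ h₂ => rw [lie_add]; exact add_mem h₁ h₂
  | smul_left _ _ _ _ _ h => rw [smul_lie]; exact Submodule.smul_mem _ _ h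
  | smul_right _ _ _ _ _ h => rw [lie_smul]; exact Submodule.smul_mem _ _ h

theorem lie_mem_Hspan_of_mem_left {x : V} (hx : x ∈ hv.Hspan) (y : V) : ⁅x, y⁆ ∈ hv.Hspan := by
  rw [← lie_skew]
  exact neg_mem (hv.lie_mem_Hspan y hx)

theorem lie_eq_zero_of_mem_Hspan {x y : V} (hx : x ∈ hv.Hspan) (hy : y ∈ hv.Hspan) :
    ⁅x, y⁆ = 0 := by
  induction hx, hy using Submodule.span_induction₂ with
  | mem_mem x y hx hy =>
    obtain ⟨_, rfl⟩ := hx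
    obtain ⟨_, rfl⟩ := hy
    exact hv.lie_H_H _ _ _ _
  | zero_left => simp
  | zero_right => simp
  | add_left _ _ _ _ _ _ h₁ h₂ => rw [add_lie, h₁, h₂, add_zero]
  | add_right _ _ _ _ _ _ h₁ h₂ => rw [lie_add, h₁, h₂, add_zero]
  | smul_left _ _ _ _ _ h => rw [smul_lie, h, smul_zero]
  | smul_right _ _ _ _ _ h => rw [lie_smul, h, smul_zero]

theorem lie_H_lie_H_eq_zero (α : Γ) (i : ℕ) (x : V) : ⁅hv.H α i, ⁅hv.H α i, x⁆⁆ = 0 :=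
  hv.lie_eq_zero_of_mem_Hspan (hv.H_mem_Hspan α i)
    (hv.lie_mem_Hspan_of_mem_left (hv.H_mem_Hspan α i) x)

theorem exists_repr_eq_zero_of_le {k : Γ × ℕ → (Γ × ℕ) ⊕ (Γ × ℕ)}
    (hk : k = Sum.inl ∨ k = Sum.inr) (w : V) :
    ∃ N : ℕ, ∀ (γ : Γ) (i : ℕ), N ≤ i → hv.basis.repr w (k (γ, i)) = 0 := by
  refine ⟨(hv.basis.repr w).support.sup (Sum.elim Prod.snd Prod.snd) + 1, fun γ i hi => ?_⟩
  by_contra h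
  have hle := Finset.le_sup (f := Sum.elim Prod.snd Prod.snd) (Finsupp.mem_support_iff.2 h)
  rcases hk with rfl | rfl <;> simp only [Sum.elim_inl, Sum.elim_inr] at hle <;> omega

theorem repr_eq_zero_of_lie_L_zero_zero {k : Γ × ℕ → (Γ × ℕ) ⊕ (Γ × ℕ)}
    (hk : k = Sum.inl ∨ k = Sum.inr) {w : V} {γ₀ : Γ}
    (hw : ∀ (γ : Γ) (i : ℕ), hv.basis.repr (⁅hv.L 0 0, w⁆ - (γ₀ : ℂ) • w) (k (γ, i)) = 0)
    {γ : Γ} {i : ℕ} (hne : (γ, i) ≠ (γ₀, 0)) : hv.basis.repr w (k (γ, i)) = 0 := by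
  have hrec : ∀ (γ : Γ) (i : ℕ), ((γ : ℂ) - γ₀) * hv.basis.repr w (k (γ, i))
      + ((i : ℂ) + 1) * hv.basis.repr w (k (γ, i + 1)) = 0 := by
    intro γ i
    have := hw γ i
    rw [map_sub, map_smul, Finsupp.sub_apply, Finsupp.smul_apply, smul_eq_mul,
      hv.repr_lie_L_zero_zero hk] at this
    linear_combination this
  rcases eq_or_ne γ γ₀ with rfl | hγ
  · obtain ⟨j, rfl⟩ := Nat.exists_eq_succ_of_ne_zero (n := i) (by rintro rfl; exact hne rfl)
    simpa [Nat.cast_add_one_ne_zero] using hrec γ j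
  · obtain ⟨N, hN⟩ := hv.exists_repr_eq_zero_of_le hk w
    exact eq_zero_of_recurrence (sub_ne_zero.2 (Subtype.coe_injective.ne hγ)) (hN γ) (hrec γ) i

theorem sub_smul_L_mem_Hspan {w : V} {γ₀ : Γ} (hw : ⁅hv.L 0 0, w⁆ - (γ₀ : ℂ) • w ∈ hv.Hspan) :
    w - hv.basis.repr w (Sum.inl (γ₀, 0)) • hv.L γ₀ 0 ∈ hv.Hspan := by
  rw [mem_Hspan_iff] at hw ⊢
  rintro ⟨γ, i⟩
  rw [map_sub, map_smul, repr_L, Finsupp.sub_apply, Finsupp.smul_apply, Finsupp.single_apply]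
  rcases eq_or_ne (γ, i) (γ₀, 0) with h | h
  · simp [h]
  · simp [hv.repr_eq_zero_of_lie_L_zero_zero (.inl rfl) (fun γ i => hw (γ, i)) h, Ne.symm h]

theorem eq_smul_H_of_lie_L_zero_zero {w : V} {γ₀ : Γ} (hwH : w ∈ hv.Hspan)
    (hw : ⁅hv.L 0 0, w⁆ = (γ₀ : ℂ) • w) :
    w = hv.basis.repr w (Sum.inr (γ₀, 0)) • hv.H γ₀ 0 := by
  apply hv.basis.repr.injective
  ext (p | ⟨γ, i⟩)
  · simp [repr_H, (hv.mem_Hspan_iff w).1 hwH p]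
  · rw [map_smul, repr_H, Finsupp.smul_apply, Finsupp.single_apply]
    rcases eq_or_ne (γ, i) (γ₀, 0) with h | h
    · simp [h]
    · simp [hv.repr_eq_zero_of_lie_L_zero_zero (.inr rfl) (w := w) (by simp [hw]) h, Ne.symm h]

theorem lie_H_eq_of_sub_smul_L_mem_Hspan {w : V} {t : ℂ} {γ : Γ}
    (hw : w - t • hv.L γ 0 ∈ hv.Hspan) (β : Γ) :
    ⁅w, hv.H β 0⁆ = (t * β) • hv.H (γ + β) 0 := by
  have h := hv.lie_eq_zero_of_mem_Hspan hw (hv.H_mem_Hspan β 0)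
  rw [sub_lie, smul_lie, lie_L_H_zero, sub_eq_zero] at h
  rw [h, smul_smul]

theorem mem_Hspan_of_lie_lie_H_eq_zero (hΓ : Γ ≠ ⊥) {w : V} {t : ℂ} {γ : Γ}
    (hw : w - t • hv.L γ 0 ∈ hv.Hspan) (hww : ∀ β : Γ, ⁅w, ⁅w, hv.H β 0⁆⁆ = 0) :
    w ∈ hv.Hspan := by
  obtain ⟨β, hβ, hγβ⟩ := exists_ne_zero_and_add_ne_zero hΓ γ
  have h := hww β
  rw [hv.lie_H_eq_of_sub_smul_L_mem_Hspan hw, lie_smul, hv.lie_H_eq_of_sub_smul_L_mem_Hspan hw,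
    smul_smul, smul_eq_zero, or_iff_left (hv.H_ne_zero _ _)] at h
  push_cast at h
  have ht : t = 0 := by simpa [hβ, hγβ] using h
  simpa [ht] using hw

theorem exists_apply_H_eq_smul_H (hΓ : Γ ≠ ⊥) (σ : V ≃ₗ⁅ℂ⁆ V) {c : ℂ} (hc : c ≠ 0)
    (hσ : σ (hv.L 0 0) - c⁻¹ • hv.L 0 0 ∈ hv.Hspan) {α γ : Γ} (hγ : (γ : ℂ) = c * α) :
    ∃ f : ℂ, f ≠ 0 ∧ σ (hv.H α 0) = f • hv.H γ 0 := by
  set w := σ (hv.H α 0)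
  set h₀ := σ (hv.L 0 0) - c⁻¹ • hv.L 0 0
  have hw : ⁅σ (hv.L 0 0), w⁆ = (α : ℂ) • w := by
    rw [← LieEquiv.map_lie, lie_L_H_zero, zero_add, map_smul]
  have hcomm : ⁅hv.L 0 0, w⁆ - (γ : ℂ) • w = -(c • ⁅h₀, w⁆) := by
    rw [sub_lie, hw, smul_lie, smul_sub, smul_smul c c⁻¹, mul_inv_cancel₀ hc, one_smul, hγ,
      mul_smul]
    abel
  have hwH : w ∈ hv.Hspan := by
    refine hv.mem_Hspan_of_lie_lie_H_eq_zero hΓ (hv.sub_smul_L_mem_Hspan (γ₀ := γ) ?_) fun β => ?_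
    · rw [hcomm]
      exact neg_mem (Submodule.smul_mem _ _ (hv.lie_mem_Hspan_of_mem_left hσ w))
    · rw [← σ.apply_symm_apply (hv.H β 0), ← LieEquiv.map_lie, ← LieEquiv.map_lie,
        lie_H_lie_H_eq_zero, map_zero]
  have hγw : ⁅hv.L 0 0, w⁆ = (γ : ℂ) • w := by
    rw [← sub_eq_zero, hcomm, hv.lie_eq_zero_of_mem_Hspan hσ hwH, smul_zero, neg_zero]
  have hwγ := hv.eq_smul_H_of_lie_L_zero_zero hwH hγw
  refine ⟨_, fun hf => ?_, hwγ⟩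
  rw [hf, zero_smul, ← map_zero σ] at hwγ
  exact hv.H_ne_zero α 0 (σ.injective hwγ)

theorem mul_eq_of_apply_H_eq_smul_H (σ : V ≃ₗ⁅ℂ⁆ V) {c : ℂ} (hc : c ≠ 0) {m : Γ → Γ}
    (hm : ∀ α, (m α : ℂ) = c * α) {a f : Γ → ℂ}
    (hL : ∀ α, σ (hv.L α 0) - (c⁻¹ * a α) • hv.L (m α) 0 ∈ hv.Hspan)
    (hH : ∀ α, σ (hv.H α 0) = f α • hv.H (m α) 0) {α : Γ} (hα : (α : ℂ) ≠ 0) (β : Γ) :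
    f (β + α) = a β * f α := by
  have hm_add : m (β + α) = m β + m α := Subtype.ext (by simp [hm, mul_add])
  have h := congrArg σ (hv.lie_L_H_zero β α)
  rw [LieEquiv.map_lie, hH, lie_smul, hv.lie_H_eq_of_sub_smul_L_mem_Hspan (hL β), map_smul, hH,
    hm_add, smul_smul, smul_smul] at h
  have hcoeff := hv.smul_H_injective _ _ h
  refine mul_left_cancel₀ hα ?_
  rw [← hcoeff, hm]
  field_simp

end HVData

theorem charVal_add {Γ : AddSubgroup ℂ} (τ : Multiplicative Γ →* ℂˣ) (α β : Γ) :
    charVal τ (α + β) = charVal τ α * charVal τ β := by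
  simp [charVal, ofAdd_add]

/-- Let `σ` be an automorphism of `HV`, `c ∈ ℂ*` with `cΓ = Γ`, and `τ` a
character such that `σ(L_{α,0}) ≡ c⁻¹ τ(α) L_{cα,0}` modulo `H` for all `α`.  Then there is
`e ∈ ℂ*` with `σ(H_{α,0}) = τ(α) e H_{cα,0}` for all `α ∈ Γ`. -/
theorem HV_automorphism_on_H_alpha_0 (Γ : AddSubgroup ℂ) (hΓ : Γ ≠ ⊥)
    {V : Type*} [LieRing V] [LieAlgebra ℂ V] (hv : HVData Γ V)
    (σ : V ≃ₗ⁅ℂ⁆ V) (c : ℂ) (hc0 : c ≠ 0)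
    (hcΓ : ∀ x : ℂ, x ∈ Γ ↔ c * x ∈ Γ) (τ : Multiplicative ↥Γ →* ℂˣ)
    (hL : ∀ α : Γ, σ (hv.L α 0)
        - (c⁻¹ * charVal τ α) • hv.L ⟨c * (α : ℂ), (hcΓ (α : ℂ)).mp α.2⟩ 0 ∈ hv.Hspan) :
    ∃ e : ℂ, e ≠ 0 ∧ ∀ α : Γ,
      σ (hv.H α 0) = (charVal τ α * e) • hv.H ⟨c * (α : ℂ), (hcΓ (α : ℂ)).mp α.2⟩ 0 := by
  have hL0 : σ (hv.L 0 0) - c⁻¹ • hv.L 0 0 ∈ hv.Hspan := by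
    have hc0Γ : (⟨c * ((0 : Γ) : ℂ), (hcΓ _).mp (0 : Γ).2⟩ : Γ) = 0 := Subtype.ext (mul_zero c)
    have h := hL 0
    rw [hc0Γ] at h
    simpa [charVal] using h
  choose f hf0 hf using fun α : Γ =>
    hv.exists_apply_H_eq_smul_H hΓ σ hc0 hL0 (γ := ⟨c * α, (hcΓ α).mp α.2⟩) rfl
  obtain ⟨α₀, hα₀⟩ := AddSubgroup.ne_bot_iff_exists_ne_zero.1 hΓ
  have hτ₀ : charVal τ α₀ ≠ 0 := Units.ne_zero _
  refine ⟨(charVal τ α₀)⁻¹ * f α₀, mul_ne_zero (inv_ne_zero hτ₀) (hf0 α₀), fun α => ?_⟩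
  have hfα := hv.mul_eq_of_apply_H_eq_smul_H σ hc0 (fun _ => rfl) hL hf
    (fun h => hα₀ (Subtype.ext h)) (α - α₀)
  rw [sub_add_cancel] at hfα
  rw [hf, hfα, ← sub_add_cancel α α₀, charVal_add, sub_add_cancel]
  field_simp
end
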